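/- For two probability vectors obtained by softmax at different temperature scalings of the same logits, the one with larger scaling has Shannon entropy at most that of the one with smaller scaling: for ℓ ∈ R^C and 0 < s₁ ≤ s₂, H(softmax(s₂·ℓ)) ≤ H(softmax(s₁·ℓ)), where H(p) = -Σ_k p_k log p_k. -/
import Mathlib


noncomputable def softmax {C : ℕ} (z : Fin C → ℝ) (k : Fin C) : ℝ :=
  Real.exp (z k) / (∑ j, Real.exp (z j))

noncomputable def shannonEntropy {C : ℕ} (p : Fin C → ℝ) : ℝ :=
  -∑ k, p k * Real.log (p k)

lemma kl_nonneg {C : ℕ} (p q : Fin C → ℝ) (hp : ∀ k, 0 < p k) (hq : ∀ k, 0 < q k)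
    (hps : ∑ k, p k = 1) (hqs : ∑ k, q k = 1) :
    0 ≤ ∑ k, p k * (Real.log (p k) - Real.log (q k)) := by
  have h1 : ∀ k : Fin C, p k * (Real.log (q k) - Real.log (p k)) ≤ q k - p k := by
    intro k
    have hx : 0 < q k / p k := div_pos (hq k) (hp k)
    have hlog := Real.log_le_sub_one_of_pos hx
    rw [Real.log_div (hq k).ne' (hp k).ne'] at hlog
    calc p k * (Real.log (q k) - Real.log (p k)) ≤ p k * (q k / p k - 1) :=
          mul_le_mul_of_nonneg_left hlog (hp k).le
      _ = q k - p k := by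
        rw [mul_sub, mul_one, mul_div_cancel₀ _ (hp k).ne']
  have key : ∑ k, p k * (Real.log (q k) - Real.log (p k)) ≤ 0 := by
    calc ∑ k, p k * (Real.log (q k) - Real.log (p k)) ≤ ∑ k, (q k - p k) :=
          Finset.sum_le_sum fun k _ => h1 k
      _ = 0 := by rw [Finset.sum_sub_distrib, hps, hqs]; ring
  have heq : ∑ k, p k * (Real.log (p k) - Real.log (q k))
      = -∑ k, p k * (Real.log (q k) - Real.log (p k)) := by
    rw [← Finset.sum_neg_distrib]
    exact Finset.sum_congr rfl fun k _ => by ring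
  linarith

theorem entropy_antitone_in_scale (C : ℕ) (hC : 0 < C) (ℓ : Fin C → ℝ)
    (s₁ s₂ : ℝ) (hs₁ : 0 < s₁) (h : s₁ ≤ s₂) :
    shannonEntropy (softmax (fun k => s₂ * ℓ k)) ≤
      shannonEntropy (softmax (fun k => s₁ * ℓ k)) := by
  rcases eq_or_lt_of_le h with rfl | hlt
  · exact le_refl _
  haveI : Nonempty (Fin C) := Fin.pos_iff_nonempty.mp hC
  set Z : ℝ → ℝ := fun s => ∑ j, Real.exp (s * ℓ j) with hZdef
  have hZpos : ∀ s, 0 < Z s := fun s =>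
    Finset.sum_pos (fun j _ => Real.exp_pos _) Finset.univ_nonempty
  set p : ℝ → Fin C → ℝ := fun s k => Real.exp (s * ℓ k) / Z s with hpdef
  have hsm : ∀ s : ℝ, softmax (fun k => s * ℓ k) = p s := fun s => rfl
  have hppos : ∀ s k, 0 < p s k := fun s k => div_pos (Real.exp_pos _) (hZpos s)
  have hpsum : ∀ s, ∑ k, p s k = 1 := by
    intro s
    simp only [hpdef]
    rw [← Finset.sum_div]
    exact div_self (hZpos s).ne'
  have hlogp : ∀ s k, Real.log (p s k) = s * ℓ k - Real.log (Z s) := by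
    intro s k
    simp only [hpdef]
    rw [Real.log_div (Real.exp_pos _).ne' (hZpos s).ne', Real.log_exp]
  set E : ℝ → ℝ := fun s => ∑ k, p s k * ℓ k with hEdef
  have hsum_lin : ∀ s c d : ℝ, ∑ k, p s k * (c * ℓ k + d) = c * E s + d := by
    intro s c d
    have hterm : ∀ k : Fin C, p s k * (c * ℓ k + d) = c * (p s k * ℓ k) + d * p s k :=
      fun k => by ring
    rw [Finset.sum_congr rfl fun k _ => hterm k, Finset.sum_add_distrib,
      ← Finset.mul_sum, ← Finset.mul_sum, hpsum s, mul_one, hEdef]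
  have hH : ∀ s, shannonEntropy (p s) = Real.log (Z s) - s * E s := by
    intro s
    unfold shannonEntropy
    have : ∑ k, p s k * Real.log (p s k) = s * E s + (-Real.log (Z s)) := by
      rw [← hsum_lin s s (-Real.log (Z s))]
      exact Finset.sum_congr rfl fun k _ => by rw [hlogp s k]; ring
    rw [this]; ring
  have hKL : ∀ a b : ℝ, 0 ≤ (a - b) * E a + (Real.log (Z b) - Real.log (Z a)) := by
    intro a b
    have hkl := kl_nonneg (p a) (p b) (hppos a) (hppos b) (hpsum a) (hpsum b)
    have hrw : ∑ k, p a k * (Real.log (p a k) - Real.log (p b k))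
        = (a - b) * E a + (Real.log (Z b) - Real.log (Z a)) := by
      rw [← hsum_lin a (a - b) (Real.log (Z b) - Real.log (Z a))]
      exact Finset.sum_congr rfl fun k _ => by rw [hlogp a k, hlogp b k]; ring
    rw [hrw] at hkl
    exact hkl
  have h12 := hKL s₁ s₂
  have h21 := hKL s₂ s₁
  have hE : E s₁ ≤ E s₂ := by nlinarith
  rw [hsm, hsm, hH, hH]
  nlinarith
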